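/- arXiv:1804.03654 — 3 statements merged into one kernel-verified Lean document; each statement's English description precedes it below -/
import Mathlib

section
/- There exists an absolute constant C > 0 such that for all complex numbers z₁, z₂, w₁, w₂, each having real part ≥ −1/2, one has (1+|z₁+conj(w₁)|)·(1+|z₂+conj(w₂)|) ≤ C·(1+|z₁+z₂|)·(1+|z₁+w₂|)·(1+|w₁+z₂|)·(1+|w₁+w₂|), where conj denotes complex conjugation. -/
/-!
Write `z + conj w = (z + p) + conj (w + p) - 2 Re p` for any third point `p` with
`Re p ≥ -1/2`. The imaginary part is controlled by `‖z + p‖ + ‖w + p‖`, and so is the real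
part `Re z + Re w`, up to `1`: from below it is at least `-1`, from above `-2 Re p ≤ 1`. Hence
`1 + ‖z + conj w‖ ≤ 2 (1 + ‖z + p‖)(1 + ‖w + p‖)`. Pivoting `(z₁, w₁)` at `z₂` and at `w₂`, and
`(z₂, w₂)` at `z₁` and at `w₁`, bounds the square of the left-hand side by `16` times the square
of the product of the four factors on the right.
-/

open Complex

theorem mul_le_of_le_mul_of_le_mul {R : Type*} [CommRing R] [LinearOrder R]
    [IsStrictOrderedRing R] {x y a b c d : R} (hx : 0 ≤ x) (hy : 0 ≤ y)
    (hxac : x ≤ a * c) (hxbd : x ≤ b * d)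
    (hyab : y ≤ a * b) (hycd : y ≤ c * d) : x * y ≤ a * b * c * d := by
  have hac : 0 ≤ a * c := hx.trans hxac
  have hbd : 0 ≤ b * d := hx.trans hxbd
  have hsq : (x * y) * (x * y) ≤ (a * b * c * d) * (a * b * c * d) :=
    calc (x * y) * (x * y) ≤ (a * c * (a * b)) * (b * d * (c * d)) :=
          mul_le_mul (mul_le_mul hxac hyab hy hac) (mul_le_mul hxbd hycd hy hbd)
            (by positivity) (mul_nonneg hac (hy.trans hyab))
      _ = (a * b * c * d) * (a * b * c * d) := by ring
  have habcd : 0 ≤ a * b * c * d := (mul_nonneg hac hbd).trans_eq (by ring)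
  exact (mul_self_le_mul_self_iff (by positivity) habcd).mpr hsq

theorem norm_add_conj_le {z w p : ℂ} (hz : -(1 / 2) ≤ z.re) (hw : -(1 / 2) ≤ w.re)
    (hp : -(1 / 2) ≤ p.re) :
    ‖z + (starRingEnd ℂ) w‖ ≤ 2 * (‖z + p‖ + ‖w + p‖) + 1 := by
  have hre : |z.re + w.re| ≤ ‖z + p‖ + ‖w + p‖ + 1 := by
    have hzp := (abs_le.mp (abs_re_le_norm (z + p))).2
    have hwp := (abs_le.mp (abs_re_le_norm (w + p))).2
    simp only [add_re] at hzp hwp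
    rw [abs_le]
    constructor <;> linarith [norm_nonneg (z + p), norm_nonneg (w + p)]
  have him : |z.im - w.im| ≤ ‖z + p‖ + ‖w + p‖ :=
    calc |z.im - w.im| = |(z + p).im - (w + p).im| := by
          simp only [add_im, add_sub_add_right_eq_sub]
      _ ≤ |(z + p).im| + |(w + p).im| := abs_sub _ _
      _ ≤ ‖z + p‖ + ‖w + p‖ := add_le_add (abs_im_le_norm _) (abs_im_le_norm _)
  calc ‖z + (starRingEnd ℂ) w‖ ≤ |z.re + w.re| + |z.im - w.im| := by
        simpa [sub_eq_add_neg] using norm_le_abs_re_add_abs_im (z + (starRingEnd ℂ) w)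
    _ ≤ 2 * (‖z + p‖ + ‖w + p‖) + 1 := by linarith

theorem one_add_norm_add_conj_le {z w p : ℂ} (hz : -(1 / 2) ≤ z.re) (hw : -(1 / 2) ≤ w.re)
    (hp : -(1 / 2) ≤ p.re) :
    1 + ‖z + (starRingEnd ℂ) w‖ ≤ 2 * (1 + ‖z + p‖) * (1 + ‖w + p‖) := by
  nlinarith [norm_add_conj_le hz hw hp, mul_nonneg (norm_nonneg (z + p)) (norm_nonneg (w + p))]

/-- There is an absolute constant `C > 0` such that for all `z₁, z₂, w₁, w₂ ∈ ℂ` with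
real parts `≥ −1/2`,
`(1+|z₁+conj w₁|)(1+|z₂+conj w₂|) ≤ C (1+|z₁+z₂|)(1+|z₁+w₂|)(1+|w₁+z₂|)(1+|w₁+w₂|)`. -/
theorem one_add_abs_conj_bound :
    ∃ C : ℝ, 0 < C ∧ ∀ z₁ z₂ w₁ w₂ : ℂ,
      -(1 / 2) ≤ z₁.re → -(1 / 2) ≤ z₂.re → -(1 / 2) ≤ w₁.re → -(1 / 2) ≤ w₂.re →
      (1 + ‖z₁ + (starRingEnd ℂ) w₁‖) * (1 + ‖z₂ + (starRingEnd ℂ) w₂‖) ≤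
        C * (1 + ‖z₁ + z₂‖) * (1 + ‖z₁ + w₂‖) * (1 + ‖w₁ + z₂‖) * (1 + ‖w₁ + w₂‖) := by
  refine ⟨4, by norm_num, fun z₁ z₂ w₁ w₂ hz₁ hz₂ hw₁ hw₂ => ?_⟩
  have hX₁ := one_add_norm_add_conj_le hz₁ hw₁ hz₂
  have hX₂ := one_add_norm_add_conj_le hz₁ hw₁ hw₂
  have hY₁ := one_add_norm_add_conj_le hz₂ hw₂ hz₁
  have hY₂ := one_add_norm_add_conj_le hz₂ hw₂ hw₁
  rw [add_comm z₂ z₁, add_comm w₂ z₁] at hY₁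
  rw [add_comm z₂ w₁, add_comm w₂ w₁] at hY₂
  exact (mul_le_of_le_mul_of_le_mul (b := 1 + ‖z₁ + w₂‖) (d := 2 * (1 + ‖w₁ + w₂‖))
    (by positivity) (by positivity) hX₁ (hX₂.trans_eq (by ring)) hY₁
    (hY₂.trans_eq (by ring))).trans_eq (by ring)
end

section
/- Let z = x+iy be a nonzero complex number with |x| ≤ 1/2. Then log|cot(πz/2)| = (1/2)·log((cosh(πy)+cos(πx))/(cosh(πy)−cos(πx))), and this quantity is ≥ cos(πx)/cosh(πy). -/
open Complex

/-- Key inequality: `2t ≤ log((1+t)/(1−t))` for `0 ≤ t < 1`. -/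
lemma two_mul_le_log_ratio {t : ℝ} (h0 : 0 ≤ t) (h1 : t < 1) :
    2 * t ≤ Real.log ((1 + t) / (1 - t)) := by
  set f : ℝ → ℝ := fun s => Real.log (1 + s) - Real.log (1 - s) - 2 * s with hf
  have hder : ∀ s ∈ Set.Ioo (-1 : ℝ) 1,
      HasDerivAt f (1 / (1 + s) + 1 / (1 - s) - 2) s := by
    intro s hs
    have hp : (0 : ℝ) < 1 + s := by linarith [hs.1]
    have hm : (0 : ℝ) < 1 - s := by linarith [hs.2]
    have d1 : HasDerivAt (fun s : ℝ => Real.log (1 + s)) (1 / (1 + s)) s := by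
      have := ((hasDerivAt_id s).const_add 1).log hp.ne'
      simpa using this
    have d2 : HasDerivAt (fun s : ℝ => Real.log (1 - s)) (-1 / (1 - s)) s := by
      have h : HasDerivAt (fun s : ℝ => 1 - s) (-1) s := by
        simpa using (hasDerivAt_id s).const_sub 1
      have := h.log hm.ne'
      simpa using this
    have d3 : HasDerivAt (fun s : ℝ => 2 * s) 2 s := by
      simpa using (hasDerivAt_id s).const_mul (2 : ℝ)
    have := (d1.sub d2).sub d3
    refine this.congr_deriv ?_
    ring
  have hmono : MonotoneOn f (Set.Ioo (-1 : ℝ) 1) := by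
    apply monotoneOn_of_deriv_nonneg (convex_Ioo _ _)
    · intro s hs
      exact ((hder s hs).differentiableAt).continuousAt.continuousWithinAt
    · intro s hs
      rw [interior_Ioo] at hs
      exact ((hder s hs).differentiableAt).differentiableWithinAt
    · intro s hs
      rw [interior_Ioo] at hs
      rw [(hder s hs).deriv]
      have hp : (0 : ℝ) < 1 + s := by linarith [hs.1]
      have hm : (0 : ℝ) < 1 - s := by linarith [hs.2]
      have : 1 / (1 + s) + 1 / (1 - s) - 2 = 2 * s ^ 2 / ((1 + s) * (1 - s)) := by
        field_simp; ring
      rw [this]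
      positivity
  have h0mem : (0 : ℝ) ∈ Set.Ioo (-1 : ℝ) 1 := by norm_num
  have htmem : t ∈ Set.Ioo (-1 : ℝ) 1 := ⟨by linarith, h1⟩
  have hle := hmono h0mem htmem h0
  have hf0 : f 0 = 0 := by simp [hf]
  have hp : (0 : ℝ) < 1 + t := by linarith
  have hm : (0 : ℝ) < 1 - t := by linarith
  rw [Real.log_div hp.ne' hm.ne']
  have : f t = Real.log (1 + t) - Real.log (1 - t) - 2 * t := rfl
  rw [hf0] at hle
  simp only [hf] at hle
  linarith

set_option maxHeartbeats 1000000 in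
/-- **Inequality (5.2).** If `z = x+iy ≠ 0` with `|x| ≤ 1/2`, then
`log|cot(πz/2)| = (1/2) log((cosh(πy)+cos(πx))/(cosh(πy)−cos(πx)))`, and this
quantity is `≥ cos(πx)/cosh(πy)`. -/
theorem log_abs_cot_eq_and_ge (x y : ℝ) (hz : (x : ℂ) + (y : ℂ) * Complex.I ≠ 0)
    (hx : |x| ≤ 1 / 2) :
    Real.log ‖Complex.cos (Real.pi * ((x : ℂ) + (y : ℂ) * Complex.I) / 2) /
        Complex.sin (Real.pi * ((x : ℂ) + (y : ℂ) * Complex.I) / 2)‖ =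
      1 / 2 * Real.log ((Real.cosh (Real.pi * y) + Real.cos (Real.pi * x)) /
        (Real.cosh (Real.pi * y) - Real.cos (Real.pi * x))) ∧
    Real.cos (Real.pi * x) / Real.cosh (Real.pi * y) ≤
      1 / 2 * Real.log ((Real.cosh (Real.pi * y) + Real.cos (Real.pi * x)) /
        (Real.cosh (Real.pi * y) - Real.cos (Real.pi * x))) := by
  have hpi := Real.pi_pos
  obtain ⟨hxl, hxr⟩ := abs_le.mp hx
  set c := Real.cosh (Real.pi * y) with hc
  set u := Real.cos (Real.pi * x) with hu
  have hc1 : 1 ≤ c := Real.one_le_cosh _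
  have hu1 : u ≤ 1 := Real.cos_le_one _
  have hu0 : 0 ≤ u := by
    apply Real.cos_nonneg_of_mem_Icc
    constructor <;> nlinarith
  -- cosh(πy) − cos(πx) > 0
  have hxy : x ≠ 0 ∨ y ≠ 0 := by
    by_contra h
    push_neg at h
    exact hz (by simp [h.1, h.2])
  have hQ : 0 < c - u := by
    rcases hxy with hx0 | hy0
    · have hune : u ≠ 1 := by
        intro h
        have h2 : Real.pi * x = 0 := by
          have := (Real.cos_eq_one_iff_of_lt_of_lt
            (x := Real.pi * x) (by nlinarith) (by nlinarith)).mp h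
          exact this
        exact hx0 (by
          rcases mul_eq_zero.mp h2 with h | h
          · exact absurd h Real.pi_ne_zero
          · exact h)
      have : u < 1 := lt_of_le_of_ne hu1 hune
      linarith
    · have : 1 < c := Real.one_lt_cosh.mpr (mul_ne_zero Real.pi_ne_zero hy0)
      linarith
  have hP : 0 < c + u := by linarith
  -- norm computations
  set w : ℂ := (Real.pi : ℂ) * ((x : ℂ) + (y : ℂ) * Complex.I) / 2 with hw
  have hwadd : w = ((Real.pi * x / 2 : ℝ) : ℂ) + ((Real.pi * y / 2 : ℝ) : ℂ) * Complex.I := by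
    rw [hw]; push_cast; ring
  set a := Real.pi * x / 2 with ha
  set b := Real.pi * y / 2 with hb
  -- double angle identities
  have hcosh2 : c = Real.cosh b ^ 2 + Real.sinh b ^ 2 := by
    rw [hc, show Real.pi * y = 2 * b by rw [hb]; ring, Real.cosh_two_mul]
  have hcos2 : u = 2 * Real.cos a ^ 2 - 1 := by
    rw [hu, show Real.pi * x = 2 * a by rw [ha]; ring, Real.cos_two_mul]
  have hpyth : Real.sin a ^ 2 + Real.cos a ^ 2 = 1 := Real.sin_sq_add_cos_sq a
  have hchsq : Real.cosh b ^ 2 = Real.sinh b ^ 2 + 1 := Real.cosh_sq b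
  have hcosval : Complex.cos w =
      ((Real.cos a * Real.cosh b : ℝ) : ℂ) + ((-(Real.sin a * Real.sinh b) : ℝ) : ℂ) * Complex.I := by
    rw [hwadd, Complex.cos_add_mul_I]
    push_cast
    rw [← Complex.ofReal_cos, ← Complex.ofReal_sin, ← Complex.ofReal_cosh, ← Complex.ofReal_sinh]
    ring
  have hsinval : Complex.sin w =
      ((Real.sin a * Real.cosh b : ℝ) : ℂ) + ((Real.cos a * Real.sinh b : ℝ) : ℂ) * Complex.I := by
    rw [hwadd, Complex.sin_add_mul_I]
    push_cast
    ring
  have hncos : ‖Complex.cos w‖ ^ 2 = (c + u) / 2 := by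
    rw [show ‖Complex.cos w‖ ^ 2 = Complex.normSq (Complex.cos w) by
      rw [Complex.sq_norm]]
    rw [hcosval, Complex.normSq_add_mul_I]
    nlinarith [hcosh2, hcos2, hpyth, hchsq]
  have hnsin : ‖Complex.sin w‖ ^ 2 = (c - u) / 2 := by
    rw [show ‖Complex.sin w‖ ^ 2 = Complex.normSq (Complex.sin w) by
      rw [Complex.sq_norm]]
    rw [hsinval, Complex.normSq_add_mul_I]
    nlinarith [hcosh2, hcos2, hpyth, hchsq]
  have hncos_pos : 0 < ‖Complex.cos w‖ := by
    have h2 : (0 : ℝ) < ‖Complex.cos w‖ ^ 2 := by rw [hncos]; linarith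
    rcases (norm_nonneg (Complex.cos w)).lt_or_eq with h | h
    · exact h
    · exfalso; rw [← h] at h2; simp at h2
  have hnsin_pos : 0 < ‖Complex.sin w‖ := by
    have h2 : (0 : ℝ) < ‖Complex.sin w‖ ^ 2 := by rw [hnsin]; linarith
    rcases (norm_nonneg (Complex.sin w)).lt_or_eq with h | h
    · exact h
    · exfalso; rw [← h] at h2; simp at h2
  have hlc : Real.log ((c + u) / 2) = 2 * Real.log ‖Complex.cos w‖ := by
    rw [← hncos, Real.log_pow]; norm_num
  have hls : Real.log ((c - u) / 2) = 2 * Real.log ‖Complex.sin w‖ := by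
    rw [← hnsin, Real.log_pow]; norm_num
  have hratio : Real.log ((c + u) / (c - u)) =
      Real.log ((c + u) / 2) - Real.log ((c - u) / 2) := by
    rw [show (c + u) / (c - u) = ((c + u) / 2) / ((c - u) / 2) by
      field_simp]
    exact Real.log_div (by positivity) (by positivity)
  have heq : Real.log ‖Complex.cos w / Complex.sin w‖ =
      1 / 2 * Real.log ((c + u) / (c - u)) := by
    rw [norm_div, Real.log_div hncos_pos.ne' hnsin_pos.ne', hratio, hlc, hls]
    ring
  refine ⟨heq, ?_⟩
  -- the inequality
  have hc0 : (0 : ℝ) < c := by linarith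
  have ht0 : 0 ≤ u / c := div_nonneg hu0 hc0.le
  have ht1 : u / c < 1 := (div_lt_one hc0).mpr (by linarith)
  have hkey := two_mul_le_log_ratio ht0 ht1
  have hrw : (1 + u / c) / (1 - u / c) = (c + u) / (c - u) := by
    rw [div_eq_div_iff (by linarith) hQ.ne']
    field_simp
  rw [hrw] at hkey
  linarith
end

section
/- For every real number u, ∫_{−∞}^{∞} e^{−itu}/cosh(πt) dt = 1/cosh(u/2). In particular, for every integer n ≥ 1, ∫_{−∞}^{∞} n^{−it}/cosh(πt) dt = 1/cosh((log n)/2) = 2/(√n + 1/√n). -/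
open Complex MeasureTheory

lemma aux_main (u : ℝ) :
    (∫ t : ℝ, Complex.exp (-(Complex.I * t * u)) / (Real.cosh (Real.pi * t) : ℂ)) =
      ((Real.cosh (u / 2))⁻¹ : ℝ) := by
  have hπ : (0:ℝ) < Real.pi := Real.pi_pos
  set s : ℂ := (u / (2 * Real.pi) : ℝ) * Complex.I with hs
  set φ : ℝ → ℝ := fun t => (1 + Real.exp (2 * Real.pi * t))⁻¹ with hφ
  set g : ℝ → ℂ := fun x => (x:ℂ) ^ (1/2 + s - 1) * (1 - (x:ℂ)) ^ (1/2 - s - 1) with hg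
  set F : ℝ → ℝ := fun t => -(Real.exp (2 * Real.pi * t) * (2 * Real.pi)) /
      (1 + Real.exp (2 * Real.pi * t)) ^ 2 with hF
  -- derivative of φ
  have hderiv : ∀ t : ℝ, HasDerivAt φ (F t) t := by
    intro t
    have h1 : HasDerivAt (fun t : ℝ => 2 * Real.pi * t) (2 * Real.pi) t := by
      simpa using (hasDerivAt_id t).const_mul (2 * Real.pi)
    have h2 := h1.exp
    have h3 := h2.const_add 1
    exact h3.inv (by positivity)
  -- injectivity
  have hinj : Function.Injective φ := by
    intro a b hab
    have h1 : 1 + Real.exp (2 * Real.pi * a) = 1 + Real.exp (2 * Real.pi * b) :=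
      inv_injective hab
    have h2 : Real.exp (2 * Real.pi * a) = Real.exp (2 * Real.pi * b) := by linarith
    have h3 := Real.exp_injective h2
    exact mul_left_cancel₀ (by positivity) h3
  -- image
  have himg : φ '' Set.univ = Set.Ioo (0:ℝ) 1 := by
    ext y
    simp only [Set.image_univ, Set.mem_range, Set.mem_Ioo]
    constructor
    · rintro ⟨t, rfl⟩
      have he : (0:ℝ) < Real.exp (2 * Real.pi * t) := Real.exp_pos _
      constructor
      · positivity
      · rw [inv_lt_one_iff₀]
        right; linarith
    · rintro ⟨h0, h1⟩
      have h2 : (0:ℝ) < y⁻¹ - 1 := by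
        have := (one_lt_inv₀ h0).mpr h1
        linarith
      refine ⟨Real.log (y⁻¹ - 1) / (2 * Real.pi), ?_⟩
      have h3 : 2 * Real.pi * (Real.log (y⁻¹ - 1) / (2 * Real.pi)) = Real.log (y⁻¹ - 1) := by
        field_simp
      simp only [hφ, h3, Real.exp_log h2]
      have : 1 + (y⁻¹ - 1) = y⁻¹ := by ring
      rw [this, inv_inv]
  -- pointwise identity
  have hpt : ∀ t : ℝ, |F t| • g (φ t) =
      (Real.pi : ℂ) * (Complex.exp (-(Complex.I * t * u)) / (Real.cosh (Real.pi * t) : ℂ)) := by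
    intro t
    set E : ℝ := Real.exp (Real.pi * t) with hE
    have hE0 : 0 < E := Real.exp_pos _
    have hE2 : Real.exp (2 * Real.pi * t) = E ^ 2 := by
      rw [hE, sq, ← Real.exp_add]; ring_nf
    have hch : Real.cosh (Real.pi * t) = (E + E⁻¹) / 2 := by
      rw [Real.cosh_eq, Real.exp_neg]
    have hch0 : 0 < Real.cosh (Real.pi * t) := Real.cosh_pos _
    have hA : 1 + E ^ 2 = E * (2 * Real.cosh (Real.pi * t)) := by
      rw [hch]; field_simp; ring
    have hA0 : (0:ℝ) < 1 + E ^ 2 := by positivity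
    -- |F t|
    have hFt : |F t| = 2 * Real.pi * E ^ 2 / (1 + E ^ 2) ^ 2 := by
      rw [hF]
      simp only [hE2]
      rw [abs_div, abs_neg, _root_.abs_of_nonneg (by positivity : (0:ℝ) ≤ E ^ 2 * (2 * Real.pi)),
        _root_.abs_of_nonneg (by positivity : (0:ℝ) ≤ ((1 + E ^ 2) ^ 2 : ℝ))]
      ring
    -- value of φ t
    have hx0 : 0 < φ t := by simp only [hφ]; positivity
    have hx1 : 1 - φ t = E ^ 2 * (1 + E ^ 2)⁻¹ := by
      simp only [hφ, hE2]
      field_simp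
      ring
    have hx1pos : 0 < 1 - φ t := by rw [hx1]; positivity
    -- logs
    have hLx : Real.log (φ t) = -Real.log (1 + E ^ 2) := by
      simp only [hφ, hE2, Real.log_inv]
    have hL1x : Real.log (1 - φ t) = 2 * Real.pi * t - Real.log (1 + E ^ 2) := by
      rw [hx1, Real.log_mul (by positivity) (by positivity), Real.log_inv, ← hE2,
        Real.log_exp]
      ring
    -- compute g (φ t)
    have hg1 : g (φ t) = Complex.exp ((Real.log (φ t) : ℂ) * (1/2 + s - 1)
        + (Real.log (1 - φ t) : ℂ) * (1/2 - s - 1)) := by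
      rw [hg]
      simp only
      rw [Complex.cpow_def_of_ne_zero (by exact_mod_cast hx0.ne' : (φ t : ℂ) ≠ 0),
        show (1 : ℂ) - (φ t : ℂ) = ((1 - φ t : ℝ) : ℂ) by push_cast; ring,
        Complex.cpow_def_of_ne_zero (by exact_mod_cast hx1pos.ne' : ((1 - φ t : ℝ) : ℂ) ≠ 0),
        ← Complex.ofReal_log hx0.le, ← Complex.ofReal_log hx1pos.le, ← Complex.exp_add]
    have harg : (Real.log (φ t) : ℂ) * (1/2 + s - 1)
        + (Real.log (1 - φ t) : ℂ) * (1/2 - s - 1)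
        = (Real.log (1 + E ^ 2) : ℂ) + (-(Real.pi * t) : ℝ) + -(Complex.I * t * u) := by
      rw [hLx, hL1x, hs]
      push_cast
      have hπc : (Real.pi : ℂ) ≠ 0 := by exact_mod_cast hπ.ne'
      field_simp
      ring
    have hg2 : g (φ t) = ((1 + E ^ 2 : ℝ) : ℂ) * ((E⁻¹ : ℝ) : ℂ)
        * Complex.exp (-(Complex.I * t * u)) := by
      rw [hg1, harg, Complex.exp_add, Complex.exp_add, ← Complex.ofReal_exp,
        ← Complex.ofReal_exp, Real.exp_log hA0, Real.exp_neg, hE]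
    -- finish
    have hreal : 2 * Real.pi * E ^ 2 / (1 + E ^ 2) ^ 2 * ((1 + E ^ 2) * E⁻¹)
        = Real.pi / Real.cosh (Real.pi * t) := by
      rw [hA]
      field_simp
    rw [hFt, hg2, Complex.real_smul]
    have hstep : ((2 * Real.pi * E ^ 2 / (1 + E ^ 2) ^ 2 : ℝ) : ℂ)
        * (((1 + E ^ 2 : ℝ) : ℂ) * ((E⁻¹ : ℝ) : ℂ) * Complex.exp (-(Complex.I * t * u)))
        = ((Real.pi / Real.cosh (Real.pi * t) : ℝ) : ℂ)
          * Complex.exp (-(Complex.I * t * u)) := by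
      rw [← hreal]; push_cast; ring
    rw [hstep]
    push_cast
    ring
  -- change of variables
  have key : (∫ x in Set.Ioo (0:ℝ) 1, g x) = ∫ t : ℝ, |F t| • g (φ t) := by
    rw [← himg,
      integral_image_eq_integral_abs_deriv_smul MeasurableSet.univ
        (fun t _ => (hderiv t).hasDerivWithinAt) hinj.injOn g,
      MeasureTheory.setIntegral_univ]
  -- beta integral
  have hsre : s.re = 0 := by
    rw [hs, Complex.mul_re, Complex.I_re, Complex.I_im, Complex.ofReal_im]; ring
  have hhalf : ((1/2 : ℂ)).re = 1/2 := by norm_num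
  have hres : (0:ℝ) < (1/2 + s).re ∧ (0:ℝ) < (1/2 - s).re := by
    rw [Complex.add_re, Complex.sub_re, hsre, hhalf]
    norm_num
  have hbeta : Complex.betaIntegral (1/2 + s) (1/2 - s) = ∫ x in Set.Ioo (0:ℝ) 1, g x := by
    rw [Complex.betaIntegral, intervalIntegral.integral_of_le zero_le_one,
      MeasureTheory.integral_Ioc_eq_integral_Ioo]
  have hΓbeta : Complex.betaIntegral (1/2 + s) (1/2 - s)
      = Complex.Gamma (1/2 + s) * Complex.Gamma (1/2 - s) := by
    have h := Complex.Gamma_mul_Gamma_eq_betaIntegral hres.1 hres.2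
    rw [show (1/2 + s) + (1/2 - s) = 1 by ring, Complex.Gamma_one, one_mul] at h
    exact h.symm
  have hrefl : Complex.Gamma (1/2 + s) * Complex.Gamma (1/2 - s)
      = (Real.pi : ℂ) / ((Real.cosh (u/2) : ℝ) : ℂ) := by
    have h := Complex.Gamma_mul_Gamma_one_sub (1/2 + s)
    rw [show (1:ℂ) - (1/2 + s) = 1/2 - s by ring] at h
    rw [h]
    congr 1
    rw [show (Real.pi : ℂ) * (1/2 + s) = (Real.pi : ℂ) * s + (Real.pi : ℝ) / 2 by push_cast; ring,
      Complex.sin_add_pi_div_two]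
    have hπc : (Real.pi : ℂ) ≠ 0 := by exact_mod_cast hπ.ne'
    rw [show (Real.pi : ℂ) * s = ((u/2 : ℝ) : ℂ) * Complex.I by rw [hs]; push_cast; field_simp,
      Complex.cos_mul_I, Complex.ofReal_cosh]
  have hπc : (Real.pi : ℂ) ≠ 0 := by exact_mod_cast hπ.ne'
  have hchc : ((Real.cosh (u/2) : ℝ) : ℂ) ≠ 0 := by
    exact_mod_cast (Real.cosh_pos (x := u/2)).ne'
  -- assemble
  have hint : (∫ t : ℝ, Complex.exp (-(Complex.I * t * u)) / (Real.cosh (Real.pi * t) : ℂ))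
      = (Real.pi : ℂ)⁻¹ * ∫ x in Set.Ioo (0:ℝ) 1, g x := by
    rw [key]
    simp_rw [hpt]
    rw [show (fun t : ℝ => (Real.pi : ℂ) *
        (Complex.exp (-(Complex.I * t * u)) / (Real.cosh (Real.pi * t) : ℂ)))
      = fun t : ℝ => (Real.pi : ℂ) •
        (Complex.exp (-(Complex.I * t * u)) / (Real.cosh (Real.pi * t) : ℂ)) from rfl,
      integral_smul, smul_eq_mul, ← mul_assoc, inv_mul_cancel₀ hπc, one_mul]
  rw [hint, ← hbeta, hΓbeta, hrefl]
  field_simp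
  rw [Complex.ofReal_div, Complex.ofReal_one, mul_one_div_cancel hchc]

/-- For every real `u`, `∫_{−∞}^{∞} e^{−itu}/cosh(πt) dt = 1/cosh(u/2)`; in particular,
for every integer `n ≥ 1`,
`∫_{−∞}^{∞} n^{−it}/cosh(πt) dt = 1/cosh((log n)/2) = 2/(√n + 1/√n)`. -/
theorem integral_exp_div_cosh :
    (∀ u : ℝ, (∫ t : ℝ, Complex.exp (-(Complex.I * t * u)) / (Real.cosh (Real.pi * t) : ℂ)) =
      ((Real.cosh (u / 2))⁻¹ : ℝ)) ∧
    ∀ n : ℕ, 1 ≤ n →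
      (∫ t : ℝ, (n : ℂ) ^ (-(Complex.I * t)) / (Real.cosh (Real.pi * t) : ℂ)) =
          ((Real.cosh (Real.log n / 2))⁻¹ : ℝ) ∧
        ((Real.cosh (Real.log n / 2))⁻¹ : ℝ) =
          2 / (Real.sqrt n + 1 / Real.sqrt n) := by
  refine ⟨aux_main, fun n hn => ⟨?_, ?_⟩⟩
  · have hn0 : ((n : ℂ)) ≠ 0 := by
      exact_mod_cast Nat.cast_ne_zero.mpr (by omega)
    have heq : ∀ t : ℝ, (n : ℂ) ^ (-(Complex.I * t))
        = Complex.exp (-(Complex.I * t * (Real.log n : ℝ))) := by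
      intro t
      rw [Complex.cpow_def_of_ne_zero hn0]
      exact congrArg Complex.exp (by rw [← Complex.natCast_log]; ring)
    simp_rw [heq]
    exact aux_main (Real.log n)
  · have h0 : (0:ℝ) < n := by exact_mod_cast hn
    have hs : Real.sqrt n = Real.exp (Real.log n / 2) := by
      rw [Real.sqrt_eq_rpow, Real.rpow_def_of_pos h0]
      ring_nf
    rw [Real.cosh_eq, Real.exp_neg, ← hs, one_div, inv_div]
end
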